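/- For a positive integer B, grid points β_k = π(2k+1)/(4B) for k = 0,...,2B-1, and weights w_k = (1/4B³) sin(β_k) ∑_{j=0}^{B-1} (1/(2j+1)) sin((2j+1)β_k), the weights satisfy ∑_{k=0}^{2B-1} w_k = 1/(4B²). -/

import Mathlib

/-!
Swap the two sums. By product-to-sum, `2 sin β sin((2j+1)β) = cos(2jβ) - cos((2j+2)β)`, and at the
nodes `β_k = π(2k+1)/(4B)` the sum `∑_{k<2B} cos((2k+1)·mπ/(2B))` equals `sin(2mπ)/(2 sin(mπ/(2B))) = 0`
for `0 < m < 2B`, and `2B` for `m = 0`. Hence only `j = 0` survives, contributing `B/(4B³)`.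
-/

open Real Finset

theorem Real.sum_range_cos_odd_mul_eq_zero {N m : ℕ} (hm : 0 < m) (hmN : m < N) :
    ∑ k ∈ range N, cos ((2 * k + 1) * (m * π / N)) = 0 := by
  have hN : (0 : ℝ) < N := by exact_mod_cast hm.trans hmN
  have hsin : sin (m * π / N) ≠ 0 := by
    refine (sin_pos_of_pos_of_lt_pi (by positivity) ?_).ne'
    rw [div_lt_iff₀ hN, mul_comm]
    gcongr
  have hvanish : sin (N * (2 * (m * π / N)) / 2) = 0 := by
    rw [← sin_nat_mul_pi m]
    congr 1
    field_simp
  have h := sin_mul_sum_cos N (2 * (m * π / N)) (m * π / N)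
  rw [hvanish, zero_mul, mul_div_cancel_left₀ _ two_ne_zero] at h
  convert (mul_eq_zero.mp h).resolve_left hsin using 3 with k
  ring

theorem Real.sum_range_sin_mul_sin_odd_mul_eq_ite {N j : ℕ} (hj : j + 1 < N) :
    ∑ k ∈ range N,
        sin (π * (2 * k + 1) / (2 * N)) * sin ((2 * j + 1) * (π * (2 * k + 1) / (2 * N))) =
      if j = 0 then (N : ℝ) / 2 else 0 := by
  have hprod : ∀ k : ℕ,
      sin (π * (2 * k + 1) / (2 * N)) * sin ((2 * j + 1) * (π * (2 * k + 1) / (2 * N))) =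
        (cos ((2 * k + 1) * (j * π / N)) - cos ((2 * k + 1) * ((j + 1 : ℕ) * π / N))) / 2 := by
    intro k
    rw [eq_div_iff two_ne_zero, mul_comm, ← mul_assoc, mul_right_comm, two_mul_sin_mul_sin]
    congr 2 <;> push_cast <;> ring
  simp_rw [hprod, ← sum_div, sum_sub_distrib, sum_range_cos_odd_mul_eq_zero j.succ_pos hj]
  rcases j.eq_zero_or_pos with rfl | hj0
  · simp
  · simp [hj0.ne', sum_range_cos_odd_mul_eq_zero hj0 (by omega : j < N)]

theorem sum_quadrature_weights (B : ℕ) (hB : 0 < B) :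
    ∑ k ∈ Finset.range (2 * B),
        (1 / (4 * (B : ℝ) ^ 3)) * Real.sin (π * (2 * k + 1) / (4 * B)) *
          ∑ j ∈ Finset.range B,
            (1 / (2 * (j : ℝ) + 1)) * Real.sin ((2 * j + 1) * (π * (2 * k + 1) / (4 * B))) =
      1 / (4 * (B : ℝ) ^ 2) := by
  have hinner : ∀ j ∈ range B, ∑ k ∈ range (2 * B),
      sin (π * (2 * k + 1) / (4 * B)) * sin ((2 * j + 1) * (π * (2 * k + 1) / (4 * B))) =
        if j = 0 then (B : ℝ) else 0 := by
    intro j hj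
    have h := sum_range_sin_mul_sin_odd_mul_eq_ite (N := 2 * B) (j := j)
      (by rw [mem_range] at hj; omega)
    rw [show (2 : ℝ) * ((2 * B : ℕ) : ℝ) = 4 * B by push_cast; ring] at h
    rw [h, Nat.cast_mul, Nat.cast_two, mul_div_cancel_left₀ _ two_ne_zero]
  calc _ = 1 / (4 * (B : ℝ) ^ 3) * ∑ j ∈ range B, 1 / (2 * (j : ℝ) + 1) * ∑ k ∈ range (2 * B),
          sin (π * (2 * k + 1) / (4 * B)) * sin ((2 * j + 1) * (π * (2 * k + 1) / (4 * B))) := by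
        simp_rw [mul_sum]
        rw [sum_comm]
        exact sum_congr rfl fun _ _ => sum_congr rfl fun _ _ => by ring
    _ = 1 / (4 * (B : ℝ) ^ 3) * B := by
        rw [sum_congr rfl fun j hj => by rw [hinner j hj]]
        simp [hB]
    _ = 1 / (4 * (B : ℝ) ^ 2) := by
        field_simp
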